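/- (Lemma 4, upper-end truncation step) In the setup below, for every S ⊆ {1,…,n} with |S| ≤ k: (1/2)·(1−ε)^{k−1}·(1−Δ/ε) · v₁(S) ≤ u(S) ≤ 2·(1−ε)^{−(k−1)}·(1−Δ/ε)^{−1} · v₁(S). -/

import Mathlib

/-!
Let `X̄` be `X` with every value above its threshold replaced by `0`, and `W = 𝔼[f(X̄_S)]`.
For `Z = X` and `Z = X̂`, monotonicity gives `W ≤ 𝔼[f(Z_S)]`, and subadditivity splits off the
coordinates above their thresholds: `𝔼[f(Z_S)] ≤ W + I` with the same
`I = ∑_{i∈S} 𝔼[f(X_i e_i); X_i > τ_i]` in both cases, because `f(c_i e_i)` is the conditional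
mean of `f(X_i e_i)` on `{X_i > τ_i}`. Conversely, `f(Z_S)` dominates `f(Z_i e_i)` for the first
`i ∈ S` with `X_i > τ_i`; the event that no earlier index of `S` exceeds its threshold is
independent of `X_i` and has probability at least `(1-ε)^{|S|-1}`, so
`(1-ε)^{k-1} I ≤ 𝔼[f(Z_S)]`. Comparing these bounds for the two choices of `Z` gives the result.
-/

open MeasureTheory ProbabilityTheory

/-- For a subset `S` of coordinates, `mask S x` is the vector agreeing with `x` on `S`
and equal to `0` outside `S`. -/
def mask {n : ℕ} (S : Finset (Fin n)) (x : Fin n → ℝ) : Fin n → ℝ :=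
  fun i => if i ∈ S then x i else 0

theorem Finset.sum_indicator_forall_lt_le {ι : Type*} [LinearOrder ι] {S : Finset ι}
    {good : Set ι} {a : ι → ℝ} {M : ℝ} (hM : 0 ≤ M) (ha : ∀ i ∈ S, a i ≤ M)
    (ha_good : ∀ i ∈ S, i ∈ good → a i = 0) :
    ∑ i ∈ S, {i | ∀ j ∈ S, j < i → j ∈ good}.indicator a i ≤ M := by
  classical
  by_cases hbad : (S.filter (· ∉ good)).Nonempty
  · set m := (S.filter (· ∉ good)).min' hbad
    obtain ⟨hmS, hm_bad⟩ := Finset.mem_filter.1 ((S.filter (· ∉ good)).min'_mem hbad)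
    rw [Finset.sum_eq_single_of_mem m hmS]
    · exact Set.indicator_apply_le' (fun _ => ha m hmS) (fun _ => hM)
    intro j hjS hjm
    rcases lt_or_gt_of_ne hjm with hjm | hmj
    · have hj_good : j ∈ good := by
        by_contra hj
        exact absurd ((S.filter (· ∉ good)).min'_le j (Finset.mem_filter.2 ⟨hjS, hj⟩))
          (not_le.2 hjm)
      exact Set.indicator_apply_eq_zero.2 fun _ => ha_good j hjS hj_good
    · exact Set.indicator_of_notMem (fun h : ∀ l ∈ S, l < j → l ∈ good => hm_bad (h m hmS hmj)) a
  · rw [Finset.not_nonempty_iff_eq_empty, Finset.filter_eq_empty_iff] at hbad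
    rw [Finset.sum_eq_zero fun i hi => Set.indicator_apply_eq_zero.2
      fun _ => ha_good i hi (not_not.1 (hbad hi))]
    exact hM

namespace ProbabilityTheory

theorem iIndepFun.setIntegral_biInter_preimage_eq_mul
    {Ω ι β : Type*} [MeasurableSpace Ω] {μ : Measure Ω} [MeasurableSpace β]
    {X : ι → Ω → β} (hX_meas : ∀ i, Measurable (X i)) (hX : iIndepFun X μ)
    {B : ι → Set β} (hB : ∀ i, MeasurableSet (B i)) {T : Finset ι} {i : ι} (hi : i ∉ T)
    {φ : β → ℝ} (hφ : Measurable φ) :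
    ∫ ω in ⋂ j ∈ T, X j ⁻¹' B j, φ (X i ω) ∂μ
      = μ.real (⋂ j ∈ T, X j ⁻¹' B j) * ∫ ω, φ (X i ω) ∂μ := by
  have hcomap_le : ∀ j, MeasurableSpace.comap (X j) inferInstance ≤ ‹MeasurableSpace Ω› :=
    fun j => (hX_meas j).comap_le
  have hindep := indep_iSup_of_disjoint hcomap_le hX.iIndep
    (S := (T : Set ι)) (T := {i}) (by simpa using hi)
  rw [iSup_singleton] at hindep
  refine hindep.setIntegral_eq_mul (iSup₂_le fun j _ => hcomap_le j) (hX_meas i).aemeasurable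
    (Finset.measurableSet_biInter T fun j hj => ?_) hφ.aestronglyMeasurable
  exact le_iSup₂ (f := fun j (_ : j ∈ (T : Set ι)) => MeasurableSpace.comap (X j) inferInstance)
    j hj _ ⟨B j, hB j, rfl⟩

theorem iIndepFun.pow_mul_sum_integral_le_integral
    {Ω ι β : Type*} [MeasurableSpace Ω] {μ : Measure Ω} [IsProbabilityMeasure μ]
    [LinearOrder ι] [MeasurableSpace β] {X : ι → Ω → β} (hX_meas : ∀ i, Measurable (X i))
    (hX : iIndepFun X μ) {B : ι → Set β} (hB : ∀ i, MeasurableSet (B i)) {p : ℝ} (hp0 : 0 ≤ p)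
    (hp : ∀ i, p ≤ μ.real (X i ⁻¹' B i)) {ψ : ι → β → ℝ} (hψ_meas : ∀ i, Measurable (ψ i))
    (hψ_nonneg : ∀ i ω, 0 ≤ ψ i (X i ω)) (hψ_zero : ∀ i, ∀ r ∈ B i, ψ i r = 0) {S : Finset ι}
    {G : Ω → ℝ} (hG_int : Integrable G μ) (hG_nonneg : ∀ ω, 0 ≤ G ω)
    (hψG : ∀ i ∈ S, ∀ ω, ψ i (X i ω) ≤ G ω) :
    p ^ (S.card - 1) * ∑ i ∈ S, ∫ ω, ψ i (X i ω) ∂μ ≤ ∫ ω, G ω ∂μ := by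
  classical
  set C : ι → Set Ω := fun i => ⋂ j ∈ S.filter (· < i), X j ⁻¹' B j
  have hC_meas : ∀ i, MeasurableSet (C i) := fun i =>
    Finset.measurableSet_biInter _ fun j _ => hX_meas j (hB j)
  have hψ_int : ∀ i ∈ S, Integrable (fun ω => ψ i (X i ω)) μ := fun i hi =>
    hG_int.mono' ((hψ_meas i).comp (hX_meas i)).aestronglyMeasurable <|
      ae_of_all _ fun ω => (Real.norm_of_nonneg (hψ_nonneg i ω)).trans_le (hψG i hi ω)
  have hC_prob : ∀ i ∈ S, p ^ (S.card - 1) ≤ μ.real (C i) := by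
    intro i hi
    have hcard : (S.filter (· < i)).card ≤ S.card - 1 :=
      (Finset.card_le_card fun j hj => Finset.mem_erase.2
        ⟨(Finset.mem_filter.1 hj).2.ne, (Finset.mem_filter.1 hj).1⟩).trans_eq
        (Finset.card_erase_of_mem hi)
    rw [measureReal_def, hX.meas_biInter fun j _ => ⟨B j, hB j, rfl⟩, ENNReal.toReal_prod]
    calc p ^ (S.card - 1) ≤ p ^ (S.filter (· < i)).card :=
          pow_le_pow_of_le_one hp0 ((hp i).trans measureReal_le_one) hcard
      _ = ∏ j ∈ S.filter (· < i), p := (Finset.prod_const p).symm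
      _ ≤ ∏ j ∈ S.filter (· < i), μ.real (X j ⁻¹' B j) :=
          Finset.prod_le_prod (fun _ _ => hp0) fun j _ => hp j
  have hterm : ∀ i ∈ S,
      p ^ (S.card - 1) * ∫ ω, ψ i (X i ω) ∂μ ≤ ∫ ω in C i, ψ i (X i ω) ∂μ := by
    intro i hi
    rw [hX.setIntegral_biInter_preimage_eq_mul hX_meas hB (by simp) (hψ_meas i)]
    exact mul_le_mul_of_nonneg_right (hC_prob i hi) (integral_nonneg fun ω => hψ_nonneg i ω)
  -- at each `ω`, only the first index of `S` whose value leaves `B` contributes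
  have hpointwise : ∀ ω, ∑ i ∈ S, (C i).indicator (fun ω => ψ i (X i ω)) ω ≤ G ω := by
    intro ω
    convert Finset.sum_indicator_forall_lt_le (good := {j | X j ω ∈ B j})
      (a := fun i => ψ i (X i ω)) (hG_nonneg ω) (hψG · · ω) (fun i _ hi => hψ_zero i _ hi)
      using 2 with i
    simp [C, Set.indicator_apply]
  calc p ^ (S.card - 1) * ∑ i ∈ S, ∫ ω, ψ i (X i ω) ∂μ
      = ∑ i ∈ S, p ^ (S.card - 1) * ∫ ω, ψ i (X i ω) ∂μ := Finset.mul_sum _ _ _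
    _ ≤ ∑ i ∈ S, ∫ ω in C i, ψ i (X i ω) ∂μ := Finset.sum_le_sum hterm
    _ = ∫ ω, ∑ i ∈ S, (C i).indicator (fun ω => ψ i (X i ω)) ω ∂μ := by
        rw [integral_finsetSum _ fun i hi => (hψ_int i hi).indicator (hC_meas i)]
        exact Finset.sum_congr rfl fun i _ => (integral_indicator (hC_meas i)).symm
    _ ≤ ∫ ω, G ω ∂μ := integral_mono
        (integrable_finsetSum _ fun i hi => (hψ_int i hi).indicator (hC_meas i)) hG_int hpointwise

end ProbabilityTheory

theorem apply_add_sum_le_of_subadditive {E ι : Type*} [AddCommMonoid E] [PartialOrder E]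
    [IsOrderedAddMonoid E] {f : E → ℝ} (hf_subadd : ∀ x y, 0 ≤ x → 0 ≤ y → f (x + y) ≤ f x + f y)
    {a : E} (ha : 0 ≤ a) (T : Finset ι) {b : ι → E} (hb : ∀ i ∈ T, 0 ≤ b i) :
    f (a + ∑ i ∈ T, b i) ≤ f a + ∑ i ∈ T, f (b i) := by
  classical
  induction T using Finset.induction_on with
  | empty => simp
  | insert i T hi ih =>
    have hT : 0 ≤ a + ∑ j ∈ T, b j :=
      add_nonneg ha (Finset.sum_nonneg fun j hj => hb j (Finset.mem_insert_of_mem hj))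
    calc f (a + ∑ j ∈ insert i T, b j) = f (a + ∑ j ∈ T, b j + b i) := by
          rw [Finset.sum_insert hi, add_left_comm, add_comm]
      _ ≤ f (a + ∑ j ∈ T, b j) + f (b i) := hf_subadd _ _ hT (hb i (Finset.mem_insert_self i T))
      _ ≤ f a + ∑ j ∈ insert i T, f (b j) := by
          rw [Finset.sum_insert hi]
          linarith [ih fun j hj => hb j (Finset.mem_insert_of_mem hj)]

noncomputable def replaceAbove {ι : Type*} (τ y x : ι → ℝ) : ι → ℝ :=
  fun i => if x i ≤ τ i then x i else y i

section replaceAbove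

variable {ι : Type*} {τ y x : ι → ℝ}

theorem replaceAbove_self : replaceAbove τ x x = x := funext fun _ => ite_self _

theorem replaceAbove_nonneg (hx : 0 ≤ x) (hy : 0 ≤ y) : 0 ≤ replaceAbove τ y x := fun i => by
  unfold replaceAbove; split_ifs
  exacts [hx i, hy i]

theorem replaceAbove_zero_le (hy : 0 ≤ y) : replaceAbove τ 0 x ≤ replaceAbove τ y x := fun i => by
  unfold replaceAbove; split_ifs
  exacts [le_rfl, hy i]

end replaceAbove

section mask

variable {n : ℕ} (S : Finset (Fin n)) {x y : Fin n → ℝ}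

theorem measurable_mask : Measurable (mask S) := by
  refine measurable_pi_lambda _ fun i => ?_
  by_cases hi : i ∈ S
  · simpa [mask, hi] using measurable_pi_apply i
  · simp [mask, hi]

theorem mask_nonneg (hx : 0 ≤ x) : 0 ≤ mask S x := fun i => by
  unfold mask; split_ifs
  exacts [hx i, le_rfl]

theorem mask_mono (h : x ≤ y) : mask S x ≤ mask S y := fun i => by
  unfold mask; split_ifs
  exacts [h i, le_rfl]

theorem single_le_mask {i : Fin n} (hi : i ∈ S) (hx : 0 ≤ x) : Pi.single i (x i) ≤ mask S x := by
  intro j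
  rcases eq_or_ne j i with rfl | hji
  · simp [mask, hi]
  · simpa [hji] using mask_nonneg S hx j

theorem mask_replaceAbove (τ : Fin n → ℝ) :
    mask S (replaceAbove τ y x)
      = mask S (replaceAbove τ 0 x) + ∑ i ∈ S with τ i < x i, Pi.single i (y i) := by
  ext j
  by_cases hj : j ∈ S <;> by_cases hxj : x j ≤ τ j <;>
    simp [mask, replaceAbove, Finset.sum_apply, Pi.single_apply, hj, hxj]

end mask

section subadditive

variable {n : ℕ} {f : (Fin n → ℝ) → ℝ} (S : Finset (Fin n)) {τ x y : Fin n → ℝ}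

theorem nonneg_of_monotone_of_subadditive
    (hf_mono : ∀ x y : Fin n → ℝ, 0 ≤ x → x ≤ y → f x ≤ f y)
    (hf_subadd : ∀ x y : Fin n → ℝ, 0 ≤ x → 0 ≤ y → f (x + y) ≤ f x + f y) (hx : 0 ≤ x) :
    0 ≤ f x := by
  have h0 : 0 ≤ f 0 := by simpa using hf_subadd 0 0 le_rfl le_rfl
  exact h0.trans (hf_mono 0 x le_rfl hx)

theorem apply_mask_replaceAbove_le
    (hf_subadd : ∀ x y : Fin n → ℝ, 0 ≤ x → 0 ≤ y → f (x + y) ≤ f x + f y) (hx : 0 ≤ x)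
    (hy : 0 ≤ y) :
    f (mask S (replaceAbove τ y x))
      ≤ f (mask S (replaceAbove τ 0 x))
        + ∑ i ∈ S, if τ i < x i then f (Pi.single i (y i)) else 0 := by
  rw [mask_replaceAbove, ← Finset.sum_filter]
  exact apply_add_sum_le_of_subadditive hf_subadd (mask_nonneg S (replaceAbove_nonneg hx le_rfl)) _
    fun i _ => Pi.single_nonneg.2 (hy i)

theorem ite_apply_single_le_apply_mask_replaceAbove
    (hf_mono : ∀ x y : Fin n → ℝ, 0 ≤ x → x ≤ y → f x ≤ f y)
    (hf_subadd : ∀ x y : Fin n → ℝ, 0 ≤ x → 0 ≤ y → f (x + y) ≤ f x + f y)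
    {i : Fin n} (hi : i ∈ S) (hx : 0 ≤ x) (hy : 0 ≤ y) :
    (if τ i < x i then f (Pi.single i (y i)) else 0) ≤ f (mask S (replaceAbove τ y x)) := by
  have hxy := replaceAbove_nonneg (τ := τ) hx hy
  split_ifs with hτx
  · have hyi : replaceAbove τ y x i = y i := if_neg (not_le.2 hτx)
    rw [← hyi]
    exact hf_mono _ _ (Pi.single_nonneg.2 (hxy i)) (single_le_mask S hi hxy)
  · exact nonneg_of_monotone_of_subadditive hf_mono hf_subadd (mask_nonneg S hxy)

end subadditive

section tail

variable {Ω : Type*} [MeasurableSpace Ω] {μ : Measure Ω} {n : ℕ} {X : Fin n → Ω → ℝ}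
  {f : (Fin n → ℝ) → ℝ} {τ : Fin n → ℝ} {g : Fin n → ℝ → ℝ} {S : Finset (Fin n)}

theorem integrable_apply_mask_replaceAbove_zero (hX_meas : ∀ i, Measurable (X i))
    (hX_nonneg : ∀ i ω, 0 ≤ X i ω) (hf_meas : Measurable f)
    (hf_mono : ∀ x y : Fin n → ℝ, 0 ≤ x → x ≤ y → f x ≤ f y)
    (hf_subadd : ∀ x y : Fin n → ℝ, 0 ≤ x → 0 ≤ y → f (x + y) ≤ f x + f y)
    (hg_nonneg : ∀ i ω, 0 ≤ g i (X i ω))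
    (hint : Integrable (fun ω => f (mask S (replaceAbove τ (fun i => g i (X i ω)) (X · ω)))) μ) :
    Integrable (fun ω => f (mask S (replaceAbove τ 0 (X · ω)))) μ := by
  have hmeas : Measurable fun ω => replaceAbove τ 0 (X · ω) := measurable_pi_lambda _ fun i =>
    Measurable.ite (measurableSet_le (hX_meas i) measurable_const) (hX_meas i) measurable_const
  refine hint.mono' (hf_meas.comp ((measurable_mask S).comp hmeas)).aestronglyMeasurable
    (ae_of_all _ fun ω => ?_)
  have hx : 0 ≤ replaceAbove τ 0 (X · ω) := replaceAbove_nonneg (hX_nonneg · ω) le_rfl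
  rw [Real.norm_of_nonneg (nonneg_of_monotone_of_subadditive hf_mono hf_subadd (mask_nonneg S hx))]
  exact hf_mono _ _ (mask_nonneg S hx) (mask_mono S (replaceAbove_zero_le fun i => hg_nonneg i ω))

theorem integral_apply_mask_replaceAbove_zero_le (hX_meas : ∀ i, Measurable (X i))
    (hX_nonneg : ∀ i ω, 0 ≤ X i ω) (hf_meas : Measurable f)
    (hf_mono : ∀ x y : Fin n → ℝ, 0 ≤ x → x ≤ y → f x ≤ f y)
    (hf_subadd : ∀ x y : Fin n → ℝ, 0 ≤ x → 0 ≤ y → f (x + y) ≤ f x + f y)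
    (hg_nonneg : ∀ i ω, 0 ≤ g i (X i ω))
    (hint : Integrable (fun ω => f (mask S (replaceAbove τ (fun i => g i (X i ω)) (X · ω)))) μ) :
    ∫ ω, f (mask S (replaceAbove τ 0 (X · ω))) ∂μ
      ≤ ∫ ω, f (mask S (replaceAbove τ (fun i => g i (X i ω)) (X · ω))) ∂μ :=
  integral_mono (integrable_apply_mask_replaceAbove_zero hX_meas hX_nonneg hf_meas hf_mono
    hf_subadd hg_nonneg hint) hint fun ω =>
      hf_mono _ _ (mask_nonneg S (replaceAbove_nonneg (hX_nonneg · ω) le_rfl))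
        (mask_mono S (replaceAbove_zero_le fun i => hg_nonneg i ω))

theorem integrable_ite_apply_single {i : Fin n} (hi : i ∈ S) (hX_meas : ∀ i, Measurable (X i))
    (hX_nonneg : ∀ i ω, 0 ≤ X i ω) (hf_meas : Measurable f)
    (hf_mono : ∀ x y : Fin n → ℝ, 0 ≤ x → x ≤ y → f x ≤ f y)
    (hf_subadd : ∀ x y : Fin n → ℝ, 0 ≤ x → 0 ≤ y → f (x + y) ≤ f x + f y)
    (hg_meas : ∀ i, Measurable (g i)) (hg_nonneg : ∀ i ω, 0 ≤ g i (X i ω))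
    (hint : Integrable (fun ω => f (mask S (replaceAbove τ (fun i => g i (X i ω)) (X · ω)))) μ) :
    Integrable (fun ω => if τ i < X i ω then f (Pi.single i (g i (X i ω))) else 0) μ := by
  refine hint.mono' (Measurable.ite (measurableSet_lt measurable_const (hX_meas i))
    (hf_meas.comp ((continuous_single i).measurable.comp ((hg_meas i).comp (hX_meas i))))
    measurable_const).aestronglyMeasurable (ae_of_all _ fun ω => ?_)
  have hbound := ite_apply_single_le_apply_mask_replaceAbove S hf_mono hf_subadd (τ := τ) hi
    (hX_nonneg · ω) (fun i => hg_nonneg i ω)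
  refine (le_of_eq (Real.norm_of_nonneg ?_)).trans hbound
  split_ifs
  exacts [nonneg_of_monotone_of_subadditive hf_mono hf_subadd (Pi.single_nonneg.2 (hg_nonneg i ω)),
    le_rfl]

theorem integral_apply_mask_replaceAbove_le (hX_meas : ∀ i, Measurable (X i))
    (hX_nonneg : ∀ i ω, 0 ≤ X i ω) (hf_meas : Measurable f)
    (hf_mono : ∀ x y : Fin n → ℝ, 0 ≤ x → x ≤ y → f x ≤ f y)
    (hf_subadd : ∀ x y : Fin n → ℝ, 0 ≤ x → 0 ≤ y → f (x + y) ≤ f x + f y)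
    (hg_meas : ∀ i, Measurable (g i)) (hg_nonneg : ∀ i ω, 0 ≤ g i (X i ω))
    (hint : Integrable (fun ω => f (mask S (replaceAbove τ (fun i => g i (X i ω)) (X · ω)))) μ) :
    ∫ ω, f (mask S (replaceAbove τ (fun i => g i (X i ω)) (X · ω))) ∂μ
      ≤ ∫ ω, f (mask S (replaceAbove τ 0 (X · ω))) ∂μ
        + ∑ i ∈ S, ∫ ω, (if τ i < X i ω then f (Pi.single i (g i (X i ω))) else 0) ∂μ := by
  have htail_int : ∀ i ∈ S, Integrable
      (fun ω => if τ i < X i ω then f (Pi.single i (g i (X i ω))) else 0) μ := fun i hi =>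
    integrable_ite_apply_single hi hX_meas hX_nonneg hf_meas hf_mono hf_subadd hg_meas hg_nonneg
      hint
  have hW_int := integrable_apply_mask_replaceAbove_zero hX_meas hX_nonneg hf_meas hf_mono
    hf_subadd hg_nonneg hint
  rw [← integral_finsetSum S htail_int, ← integral_add hW_int (integrable_finsetSum S htail_int)]
  exact integral_mono hint (hW_int.add (integrable_finsetSum S htail_int)) fun ω =>
    apply_mask_replaceAbove_le S hf_subadd (hX_nonneg · ω) fun i => hg_nonneg i ω

theorem pow_mul_sum_integral_ite_apply_single_le [IsProbabilityMeasure μ]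
    (hX_meas : ∀ i, Measurable (X i)) (hX_indep : iIndepFun X μ) (hX_nonneg : ∀ i ω, 0 ≤ X i ω)
    (hf_meas : Measurable f) (hf_mono : ∀ x y : Fin n → ℝ, 0 ≤ x → x ≤ y → f x ≤ f y)
    (hf_subadd : ∀ x y : Fin n → ℝ, 0 ≤ x → 0 ≤ y → f (x + y) ≤ f x + f y)
    (hg_meas : ∀ i, Measurable (g i)) (hg_nonneg : ∀ i ω, 0 ≤ g i (X i ω)) {p : ℝ} (hp0 : 0 ≤ p)
    (hp : ∀ i, p ≤ μ.real {ω | X i ω ≤ τ i})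
    (hint : Integrable (fun ω => f (mask S (replaceAbove τ (fun i => g i (X i ω)) (X · ω)))) μ) :
    p ^ (S.card - 1)
        * ∑ i ∈ S, ∫ ω, (if τ i < X i ω then f (Pi.single i (g i (X i ω))) else 0) ∂μ
      ≤ ∫ ω, f (mask S (replaceAbove τ (fun i => g i (X i ω)) (X · ω))) ∂μ := by
  refine hX_indep.pow_mul_sum_integral_le_integral hX_meas (B := fun i => Set.Iic (τ i))
    (fun i => measurableSet_Iic) hp0 hp
    (fun i => Measurable.ite measurableSet_Ioi
      (hf_meas.comp ((continuous_single i).measurable.comp (hg_meas i))) measurable_const)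
    (fun i ω => ?_) (fun i r hr => if_neg (not_lt.2 hr)) hint
    (fun ω => nonneg_of_monotone_of_subadditive hf_mono hf_subadd
      (mask_nonneg S (replaceAbove_nonneg (hX_nonneg · ω) fun i => hg_nonneg i _)))
    fun i hi ω => ite_apply_single_le_apply_mask_replaceAbove S hf_mono hf_subadd hi
      (hX_nonneg · ω) fun i => hg_nonneg i ω
  split_ifs
  exacts [nonneg_of_monotone_of_subadditive hf_mono hf_subadd (Pi.single_nonneg.2 (hg_nonneg i ω)),
    le_rfl]

theorem integral_apply_mask_replaceAbove_sandwich [IsProbabilityMeasure μ]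
    (hX_meas : ∀ i, Measurable (X i)) (hX_indep : iIndepFun X μ) (hX_nonneg : ∀ i ω, 0 ≤ X i ω)
    (hf_meas : Measurable f) (hf_mono : ∀ x y : Fin n → ℝ, 0 ≤ x → x ≤ y → f x ≤ f y)
    (hf_subadd : ∀ x y : Fin n → ℝ, 0 ≤ x → 0 ≤ y → f (x + y) ≤ f x + f y)
    (hg_meas : ∀ i, Measurable (g i)) (hg_nonneg : ∀ i ω, 0 ≤ g i (X i ω)) {p : ℝ} (hp0 : 0 ≤ p)
    (hp : ∀ i, p ≤ μ.real {ω | X i ω ≤ τ i})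
    (hint : Integrable (fun ω => f (mask S (replaceAbove τ (fun i => g i (X i ω)) (X · ω)))) μ) :
    ∫ ω, f (mask S (replaceAbove τ 0 (X · ω))) ∂μ
        ≤ ∫ ω, f (mask S (replaceAbove τ (fun i => g i (X i ω)) (X · ω))) ∂μ ∧
      ∫ ω, f (mask S (replaceAbove τ (fun i => g i (X i ω)) (X · ω))) ∂μ
        ≤ ∫ ω, f (mask S (replaceAbove τ 0 (X · ω))) ∂μ
          + ∑ i ∈ S, ∫ ω, (if τ i < X i ω then f (Pi.single i (g i (X i ω))) else 0) ∂μ ∧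
      p ^ (S.card - 1)
          * ∑ i ∈ S, ∫ ω, (if τ i < X i ω then f (Pi.single i (g i (X i ω))) else 0) ∂μ
        ≤ ∫ ω, f (mask S (replaceAbove τ (fun i => g i (X i ω)) (X · ω))) ∂μ :=
  ⟨integral_apply_mask_replaceAbove_zero_le hX_meas hX_nonneg hf_meas hf_mono hf_subadd
      hg_nonneg hint,
    integral_apply_mask_replaceAbove_le hX_meas hX_nonneg hf_meas hf_mono hf_subadd hg_meas
      hg_nonneg hint,
    pow_mul_sum_integral_ite_apply_single_le hX_meas hX_indep hX_nonneg hf_meas hf_mono hf_subadd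
      hg_meas hg_nonneg hp0 hp hint⟩

end tail

theorem integral_ite_setAverage {Ω : Type*} [MeasurableSpace Ω] {μ : Measure Ω}
    [IsFiniteMeasure μ] {p : Ω → Prop} [DecidablePred p] (hp : MeasurableSet {ω | p ω})
    (F : Ω → ℝ) :
    ∫ ω, (if p ω then ⨍ ω in {ω | p ω}, F ω ∂μ else 0) ∂μ = ∫ ω, (if p ω then F ω else 0) ∂μ := by
  have hind : ∀ G : Ω → ℝ, (fun ω => if p ω then G ω else 0) = {ω | p ω}.indicator G :=
    fun G => funext fun ω => by by_cases h : p ω <;> simp [h]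
  rw [hind, hind, integral_indicator_const _ hp, integral_indicator hp]
  exact measure_smul_setAverage F (measure_ne_top μ _)

theorem bounds_of_common_base_and_tail {W I a b P Q D : ℝ} (hP0 : 0 < P) (hPQ : P ≤ Q)
    (hQ1 : Q ≤ 1) (hD0 : 0 < D) (hD1 : D ≤ 1) (hWa : W ≤ a) (hWb : W ≤ b) (haI : a ≤ W + I)
    (hbI : b ≤ W + I) (hIa : Q * I ≤ a) (hIb : Q * I ≤ b) :
    1 / 2 * P * D * b ≤ a ∧ a ≤ 2 * P⁻¹ * D⁻¹ * b := by
  have hQI : 0 ≤ Q * I := mul_nonneg (hP0.le.trans hPQ) (by linarith)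
  have ha : 0 ≤ a := hQI.trans hIa
  have hb : 0 ≤ b := hQI.trans hIb
  have hQb : Q * b ≤ 2 * a := by nlinarith
  have hQa : Q * a ≤ 2 * b := by nlinarith
  constructor
  · nlinarith [mul_le_mul_of_nonneg_right hPQ hb,
      mul_le_mul_of_nonneg_left hD1 (mul_nonneg hP0.le hb)]
  · rw [show 2 * P⁻¹ * D⁻¹ * b = 2 * b / (P * D) by field_simp, le_div_iff₀ (mul_pos hP0 hD0)]
    nlinarith [mul_le_mul_of_nonneg_right hPQ ha,
      mul_le_mul_of_nonneg_left hD1 (mul_nonneg hP0.le ha)]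

theorem upper_end_truncation_bounds_general
    {Ωs : Type*} [MeasurableSpace Ωs] (μ : Measure Ωs) [IsProbabilityMeasure μ]
    {n : ℕ}
    (X : Fin n → Ωs → ℝ)
    (hX_meas : ∀ i, Measurable (X i))
    (hX_nonneg : ∀ i ω, 0 ≤ X i ω)
    (hX_indep : iIndepFun X μ)
    (f : (Fin n → ℝ) → ℝ)
    (hf_meas : Measurable f)
    (hf_mono : ∀ x y : Fin n → ℝ, 0 ≤ x → x ≤ y → f x ≤ f y)
    (hf_subadd : ∀ x y : Fin n → ℝ, 0 ≤ x → 0 ≤ y → f (x + y) ≤ f x + f y)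
    (k : ℕ)
    (ε Δ : ℝ) (hε : ε ∈ Set.Ioo (0 : ℝ) 1) (hΔ : Δ ∈ Set.Ico (0 : ℝ) ε)
    (τ : Fin n → ℝ) (hτ : ∀ i, 0 ≤ τ i)
    (hquant : ∀ i, 1 - ε ≤ (μ {ω | X i ω ≤ τ i}).toReal ∧
      (μ {ω | X i ω ≤ τ i}).toReal ≤ 1 - ε + Δ)
    (H : Fin n → ℝ)
    (hH : ∀ i, H i = (∫ ω in {ω | τ i < X i ω}, f (Pi.single i (X i ω)) ∂μ) /
      (μ {ω | τ i < X i ω}).toReal)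
    (cst : Fin n → ℝ) (hcst : ∀ i, τ i < cst i)
    (hcstH : ∀ i, f (Pi.single i (cst i)) = H i)
    (Xhat : Fin n → Ωs → ℝ)
    (hXhat : ∀ i ω, Xhat i ω = if X i ω ≤ τ i then X i ω else cst i)
    (u v₁ : Finset (Fin n) → ℝ)
    (hu : ∀ S, u S = ∫ ω, f (mask S (fun i => X i ω)) ∂μ)
    (hv₁ : ∀ S, v₁ S = ∫ ω, f (mask S (fun i => Xhat i ω)) ∂μ)
    (hu_int : ∀ S : Finset (Fin n),
      Integrable (fun ω => f (mask S (fun i => X i ω))) μ)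
    (hv₁_int : ∀ S : Finset (Fin n),
      Integrable (fun ω => f (mask S (fun i => Xhat i ω))) μ) :
    ∀ S : Finset (Fin n), S.card ≤ k →
      (1 / 2) * (1 - ε) ^ (k - 1) * (1 - Δ / ε) * v₁ S ≤ u S ∧
      u S ≤ 2 * ((1 - ε) ^ (k - 1))⁻¹ * (1 - Δ / ε)⁻¹ * v₁ S := by
  intro S hSk
  obtain ⟨hε0, hε1⟩ := hε
  obtain ⟨hΔ0, hΔε⟩ := hΔ
  have hp0 : 0 ≤ 1 - ε := sub_nonneg.2 hε1.le
  have hcst_nonneg : ∀ (i : Fin n) (_ : Ωs), 0 ≤ cst i := fun i _ => (hτ i).trans (hcst i).le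
  have hXhat_eq : ∀ ω, (Xhat · ω) = replaceAbove τ (fun i => cst i) (X · ω) :=
    fun ω => funext fun i => hXhat i ω
  have htail : ∀ i, ∫ ω, (if τ i < X i ω then f (Pi.single i (cst i)) else 0) ∂μ
      = ∫ ω, (if τ i < X i ω then f (Pi.single i (X i ω)) else 0) ∂μ := by
    intro i
    have hH_avg : H i = ⨍ ω in {ω | τ i < X i ω}, f (Pi.single i (X i ω)) ∂μ := by
      rw [hH i, setAverage_eq, smul_eq_mul, div_eq_inv_mul, measureReal_def]
    rw [hcstH, hH_avg]
    exact integral_ite_setAverage (measurableSet_lt measurable_const (hX_meas i)) _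
  obtain ⟨hW_u, hu_le, hu_tail⟩ := integral_apply_mask_replaceAbove_sandwich (g := fun _ r => r)
    hX_meas hX_indep hX_nonneg hf_meas hf_mono hf_subadd (fun _ => measurable_id) hX_nonneg hp0
    (fun i => (hquant i).1) (by simpa only [replaceAbove_self] using hu_int S)
  obtain ⟨hW_v, hv_le, hv_tail⟩ := integral_apply_mask_replaceAbove_sandwich
    (g := fun i _ => cst i) hX_meas hX_indep hX_nonneg hf_meas hf_mono hf_subadd
    (fun _ => measurable_const) hcst_nonneg hp0 (fun i => (hquant i).1)
    (by simpa only [hXhat_eq] using hv₁_int S)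
  simp only [replaceAbove_self, ← hu] at hW_u hu_le hu_tail
  simp only [htail, ← hXhat_eq, ← hv₁] at hW_v hv_le hv_tail
  exact bounds_of_common_base_and_tail (pow_pos (sub_pos.2 hε1) _)
    (pow_le_pow_of_le_one hp0 (sub_le_self _ hε0.le) (Nat.sub_le_sub_right hSk 1))
    (pow_le_one₀ hp0 (sub_le_self _ hε0.le)) (sub_pos.2 ((div_lt_one hε0).2 hΔε))
    (sub_le_self _ (div_nonneg hΔ0 hε0.le)) hW_u hW_v hu_le hv_le hu_tail hv_tail

/-- Lemma 4 (upper-end truncation step): with `X̂_i = X_i·1{X_i ≤ τ_i} + c_i·1{X_i > τ_i}`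
and `v₁(S) = E[f(X̂_S)]`, for every `S` with `|S| ≤ k`:
`(1/2)(1−ε)^{k−1}(1−Δ/ε)·v₁(S) ≤ u(S) ≤ 2(1−ε)^{−(k−1)}(1−Δ/ε)^{−1}·v₁(S)`. -/
theorem upper_end_truncation_bounds
    {Ωs : Type*} [MeasurableSpace Ωs] (μ : Measure Ωs) [IsProbabilityMeasure μ]
    {n : ℕ} (hn : 1 ≤ n)
    (X : Fin n → Ωs → ℝ)
    (hX_meas : ∀ i, Measurable (X i))
    (hX_nonneg : ∀ i ω, 0 ≤ X i ω)
    (hX_indep : iIndepFun X μ)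
    (f : (Fin n → ℝ) → ℝ)
    (hf_meas : Measurable f)
    (hf_nonneg : ∀ x : Fin n → ℝ, 0 ≤ x → 0 ≤ f x)
    (hf_mono : ∀ x y : Fin n → ℝ, 0 ≤ x → x ≤ y → f x ≤ f y)
    (hf_subadd : ∀ x y : Fin n → ℝ, 0 ≤ x → 0 ≤ y → f (x + y) ≤ f x + f y)
    (k : ℕ) (hk : 1 ≤ k)
    (ε Δ : ℝ) (hε : ε ∈ Set.Ioo (0 : ℝ) 1) (hΔ : Δ ∈ Set.Ico (0 : ℝ) ε)
    (τ : Fin n → ℝ) (hτ : ∀ i, 0 ≤ τ i)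
    (hquant : ∀ i, 1 - ε ≤ (μ {ω | X i ω ≤ τ i}).toReal ∧
      (μ {ω | X i ω ≤ τ i}).toReal ≤ 1 - ε + Δ)
    (H : Fin n → ℝ)
    (hH : ∀ i, H i = (∫ ω in {ω | τ i < X i ω}, f (Pi.single i (X i ω)) ∂μ) /
      (μ {ω | τ i < X i ω}).toReal)
    (hH_int : ∀ i, Integrable (fun ω => f (Pi.single i (X i ω))) μ)
    (cst : Fin n → ℝ) (hcst : ∀ i, τ i < cst i)
    (hcstH : ∀ i, f (Pi.single i (cst i)) = H i)
    (Xhat : Fin n → Ωs → ℝ)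
    (hXhat : ∀ i ω, Xhat i ω = if X i ω ≤ τ i then X i ω else cst i)
    (u v₁ : Finset (Fin n) → ℝ)
    (hu : ∀ S, u S = ∫ ω, f (mask S (fun i => X i ω)) ∂μ)
    (hv₁ : ∀ S, v₁ S = ∫ ω, f (mask S (fun i => Xhat i ω)) ∂μ)
    (hu_int : ∀ S : Finset (Fin n),
      Integrable (fun ω => f (mask S (fun i => X i ω))) μ)
    (hv₁_int : ∀ S : Finset (Fin n),
      Integrable (fun ω => f (mask S (fun i => Xhat i ω))) μ) :
    ∀ S : Finset (Fin n), S.card ≤ k →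
      (1 / 2) * (1 - ε) ^ (k - 1) * (1 - Δ / ε) * v₁ S ≤ u S ∧
      u S ≤ 2 * ((1 - ε) ^ (k - 1))⁻¹ * (1 - Δ / ε)⁻¹ * v₁ S :=
  upper_end_truncation_bounds_general μ X hX_meas hX_nonneg hX_indep f hf_meas hf_mono hf_subadd k ε
    Δ hε hΔ τ hτ hquant H hH cst hcst hcstH Xhat hXhat u v₁ hu hv₁ hu_int hv₁_int
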